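/- arXiv:2010.07070 — 5 statements merged into one kernel-verified Lean document; each statement's English description precedes it below -/
import Mathlib

section
/- Let (N, ν) be a simple game and i, j two distinct players. Then the sum of the Banzhaf raw counts of i and j equals twice the number of coalitions C ⊆ N \ {i,j} for which ν(C ∪ {i,j}) - ν(C) = 1 minus twice the number for which ν(C ∪ {i,j}) - ν(C) = -1; equivalently, Σ_{C ⊆ N\{i}} (ν(C∪{i}) - ν(C)) + Σ_{C ⊆ N\{j}} (ν(C∪{j}) - ν(C)) = 2 Σ_{C ⊆ N\{i,j}} (ν(C∪{i,j}) - ν(C)). -/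
open Finset

/-- Raw Banzhaf count identity: for distinct players `i ≠ j` in a simple game `ν`,
the sum of the raw swing counts of `i` and `j` equals twice the signed count of
coalitions `C ⊆ N \ {i,j}` turned from losing to winning by adding the pair `{i,j}`. -/
theorem banzhaf_raw_pair_identity {α : Type*} [Fintype α] [DecidableEq α]
    (ν : Finset α → ℤ) (hval : ∀ C, ν C = 0 ∨ ν C = 1) (i j : α) (hij : i ≠ j) :
    (∑ C ∈ (Finset.univ.erase i).powerset, (ν (insert i C) - ν C)) +
      (∑ C ∈ (Finset.univ.erase j).powerset, (ν (insert j C) - ν C)) =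
    2 * ∑ C ∈ ((Finset.univ.erase i).erase j).powerset,
          (ν (insert i (insert j C)) - ν C) := by
  classical
  set s := (Finset.univ.erase i).erase j with hs
  have hjs : j ∉ s := Finset.notMem_erase _ _
  have his : i ∉ s := by
    rw [hs, Finset.erase_right_comm]; exact Finset.notMem_erase _ _
  have h1 : (Finset.univ.erase i) = insert j s := by
    rw [hs, Finset.insert_erase (Finset.mem_erase.mpr ⟨hij.symm, Finset.mem_univ j⟩)]
  have h2 : (Finset.univ.erase j : Finset α) = insert i s := by
    rw [hs, Finset.erase_right_comm,
      Finset.insert_erase (Finset.mem_erase.mpr ⟨hij, Finset.mem_univ i⟩)]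
  rw [h1, h2, Finset.sum_powerset_insert hjs, Finset.sum_powerset_insert his,
    Finset.mul_sum, ← Finset.sum_add_distrib, ← Finset.sum_add_distrib, ← Finset.sum_add_distrib]
  refine Finset.sum_congr rfl fun C _ => ?_
  rw [Finset.insert_comm]
  ring
end

section
/- Bloc principle for the Banzhaf index: let (N, ν) be a simple game and i ≠ j in N. Define the bloc game (N', ν') where N' = (N \ {i,j}) ∪ {b} for a fresh player b, and for C ⊆ N \ {i,j}: ν'(C) = ν(C) and ν'(C ∪ {b}) = ν(C ∪ {i,j}). Then B_b(N', ν') = B_i(N, ν) + B_j(N, ν). -/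
open Finset

/-- The Banzhaf index of player `i` in the simple game `ν` on the finite player set `α`. -/
def banzhaf {α : Type*} [Fintype α] [DecidableEq α] (ν : Finset α → ℤ) (i : α) : ℚ :=
  (∑ C ∈ (Finset.univ.erase i).powerset, ((ν (insert i C) - ν C : ℤ) : ℚ)) /
    2 ^ (Fintype.card α - 1)

/-- The player set of the bloc game obtained by merging `i` and `j` into a fresh
bloc player (the `Sum.inr` element). -/
def BlocPlayers (α : Type*) (i j : α) : Type _ := {a : α // a ≠ i ∧ a ≠ j} ⊕ Unit

instance {α : Type*} [Fintype α] [DecidableEq α] (i j : α) :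
    Fintype (BlocPlayers α i j) := by unfold BlocPlayers; infer_instance

instance {α : Type*} [DecidableEq α] (i j : α) :
    DecidableEq (BlocPlayers α i j) := by unfold BlocPlayers; infer_instance

/-- The coalition of original players corresponding to a coalition in the bloc game:
each surviving player represents herself and the bloc player represents `{i, j}`. -/
def blocCoalition {α : Type*} [DecidableEq α] (i j : α)
    (C : Finset (BlocPlayers α i j)) : Finset α :=
  C.biUnion fun x => Sum.elim (fun a => {a.1}) (fun _ => ({i, j} : Finset α)) x

/-!
For a coalition `S` avoiding both `i` and `j`, the swings of `i` at `S` and at `S ∪ {j}` and those of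
`j` at `S` and at `S ∪ {i}` add up to `2 (ν(S ∪ {i, j}) - ν(S))`, twice the swing of the bloc at `S`.
Summing over `S`, the factor `2` is absorbed by the normalisation `2^(n-1)` of the original game
against `2^(n-2)` of the bloc game.
-/

namespace Finset

theorem powerset_map {α β : Type*} (f : α ↪ β) (s : Finset α) :
    (s.map f).powerset = s.powerset.map (mapEmbedding f).toEmbedding := by
  ext t
  simp [subset_map_iff, eq_comm]

theorem sum_powerset_map {α β M : Type*} [AddCommMonoid M] (f : α ↪ β) (s : Finset α)
    (g : Finset β → M) : ∑ t ∈ (s.map f).powerset, g t = ∑ t ∈ s.powerset, g (t.map f) := by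
  rw [powerset_map, sum_map]
  rfl

end Finset

section Marginal

variable {α G : Type*} [Fintype α] [DecidableEq α] [AddCommGroup G]

theorem sum_marginal_eq_sum_erase_erase (ν : Finset α → G) {i j : α} (hij : i ≠ j) :
    ∑ C ∈ (univ.erase i).powerset, (ν (insert i C) - ν C) =
      ∑ S ∈ ((univ.erase i).erase j).powerset,
        ((ν (insert i S) - ν S) + (ν (insert i (insert j S)) - ν (insert j S))) := by
  have hj : j ∈ univ.erase i := mem_erase.2 ⟨hij.symm, mem_univ j⟩
  rw [← insert_erase hj, sum_powerset_insert (notMem_erase j _), ← sum_add_distrib,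
    erase_insert (notMem_erase j _)]

theorem sum_marginal_add_sum_marginal (ν : Finset α → G) {i j : α} (hij : i ≠ j) :
    ∑ C ∈ (univ.erase i).powerset, (ν (insert i C) - ν C) +
        ∑ C ∈ (univ.erase j).powerset, (ν (insert j C) - ν C) =
      2 • ∑ S ∈ ((univ.erase i).erase j).powerset, (ν (insert i (insert j S)) - ν S) := by
  rw [sum_marginal_eq_sum_erase_erase ν hij, sum_marginal_eq_sum_erase_erase ν hij.symm,
    erase_right_comm, ← sum_add_distrib, smul_sum]
  refine sum_congr rfl fun S _ => ?_
  rw [insert_comm j i, two_smul]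
  abel

end Marginal

section Banzhaf

variable {α : Type*} [Fintype α] [DecidableEq α]

theorem banzhaf_add_banzhaf (ν : Finset α → ℤ) {i j : α} (hij : i ≠ j) :
    banzhaf ν i + banzhaf ν j =
      ((∑ S ∈ ((univ.erase i).erase j).powerset, (ν (insert i (insert j S)) - ν S) : ℤ) : ℚ) /
        2 ^ (Fintype.card α - 2) := by
  have hcard : 2 ≤ Fintype.card α := Fintype.one_lt_card_iff.2 ⟨i, j, hij⟩
  simp only [banzhaf, ← Int.cast_sum]
  rw [← add_div, ← Int.cast_add, sum_marginal_add_sum_marginal ν hij,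
    show Fintype.card α - 1 = Fintype.card α - 2 + 1 by omega, pow_succ]
  push_cast [nsmul_eq_mul]
  field_simp

theorem banzhaf_inr (μ : Finset (α ⊕ Unit) → ℤ) :
    banzhaf μ (Sum.inr ()) =
      ((∑ C ∈ (univ : Finset α).powerset,
        (μ (insert (Sum.inr ()) (C.map .inl)) - μ (C.map .inl)) : ℤ) : ℚ) / 2 ^ Fintype.card α := by
  have huniv : (univ : Finset (α ⊕ Unit)).erase (Sum.inr ()) = univ.map .inl := by
    ext (a | u) <;> simp
  simp only [banzhaf, ← Int.cast_sum, huniv, sum_powerset_map, Fintype.card_sum, Fintype.card_unit,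
    Nat.add_sub_cancel]

end Banzhaf

section Bloc

variable {α : Type*} [DecidableEq α] {i j : α}

/- `BlocPlayers` is not reducible, so the lemmas below are stated over the underlying sum type,
where the `Sum` and `Finset` simp lemmas apply. -/
theorem blocCoalition_eq_biUnion (C : Finset ({a : α // a ≠ i ∧ a ≠ j} ⊕ Unit)) :
    blocCoalition i j C = C.biUnion (Sum.elim (fun a => {a.1}) fun _ => {i, j}) :=
  rfl

theorem blocCoalition_insert_inr (C : Finset ({a : α // a ≠ i ∧ a ≠ j} ⊕ Unit)) :
    blocCoalition i j (insert (Sum.inr ()) C : Finset ({a : α // a ≠ i ∧ a ≠ j} ⊕ Unit)) =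
      insert i (insert j (blocCoalition i j C)) := by
  simp only [blocCoalition_eq_biUnion, biUnion_insert, Sum.elim_inr, insert_union,
    singleton_union]

theorem blocCoalition_map_inl (C : Finset {a : α // a ≠ i ∧ a ≠ j}) :
    blocCoalition i j (C.map .inl : Finset ({a : α // a ≠ i ∧ a ≠ j} ⊕ Unit)) =
      C.map (.subtype _) := by
  ext a
  simp [blocCoalition_eq_biUnion]

variable [Fintype α]

theorem univ_map_subtype_ne_and_ne :
    univ.map (.subtype fun a : α => a ≠ i ∧ a ≠ j) = (univ.erase i).erase j := by
  ext a
  simp [and_comm]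

theorem card_subtype_ne_and_ne (hij : i ≠ j) :
    Fintype.card {a : α // a ≠ i ∧ a ≠ j} = Fintype.card α - 2 := by
  rw [← card_univ, ← card_map, univ_map_subtype_ne_and_ne, card_erase_of_mem (by simp [hij.symm]),
    card_erase_of_mem (mem_univ i), card_univ, Nat.sub_sub]

end Bloc

theorem banzhaf_bloc_general {α : Type*} [Fintype α] [DecidableEq α]
    (ν : Finset α → ℤ) (i j : α) (hij : i ≠ j) :
    banzhaf (fun C : Finset (BlocPlayers α i j) => ν (blocCoalition i j C))
        (Sum.inr ()) =
      banzhaf ν i + banzhaf ν j := by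
  rw [banzhaf_add_banzhaf ν hij, ← univ_map_subtype_ne_and_ne, sum_powerset_map,
    ← card_subtype_ne_and_ne hij]
  -- `banzhaf_inr` applies since `BlocPlayers α i j` unfolds to a sum type.
  refine (banzhaf_inr _).trans ?_
  simp only [blocCoalition_insert_inr, blocCoalition_map_inl]

/-- Bloc principle for the Banzhaf index: merging two distinct players `i` and `j`
into a single bloc player yields a game in which the bloc's Banzhaf index is the
sum of the Banzhaf indices of `i` and `j` in the original game. -/
theorem banzhaf_bloc {α : Type*} [Fintype α] [DecidableEq α]
    (ν : Finset α → ℤ) (hval : ∀ C, ν C = 0 ∨ ν C = 1) (i j : α) (hij : i ≠ j) :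
    banzhaf (fun C : Finset (BlocPlayers α i j) => ν (blocCoalition i j C))
        (Sum.inr ()) =
      banzhaf ν i + banzhaf ν j :=
  banzhaf_bloc_general ν i j hij
end

section
/- Delegation never increases power: consider a liquid democracy election with agent set N, positive weights ω, delegation profile d, and quota β, and define its delegative simple game by ν'(C) = 1 iff Σ_{a ∈ D̂(C)} ω(a) ≥ β, where D̂(C) is the set of agents whose whole delegation chain (all intermediaries and the guru) lies inside C. Suppose d(i) = i (i is a guru), and let d' be the profile identical to d except d'(i) = j for some j ≠ i. Then the Banzhaf index of i in the delegative simple game of d' is at most its Banzhaf index in the delegative simple game of d. -/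
open Finset

/-- `LinkedIn d C a g` : agent `a` is linked to the guru `g` (a fixed point of the
delegation map `d`) by a delegation chain all of whose members lie in `C`.
`d a = none` represents abstention. -/
inductive LinkedIn {α : Type*} (d : α → Option α) (C : Finset α) : α → α → Prop
  | guru {a : α} : a ∈ C → d a = some a → LinkedIn d C a a
  | step {a b g : α} : a ∈ C → d a = some b → a ≠ b → LinkedIn d C b g → LinkedIn d C a g

/-- `hatD d C` : the set of agents that directly or indirectly delegate to some guru
in `C` through a delegation chain wholly contained in `C`. -/
noncomputable def hatD {α : Type*} [Fintype α] (d : α → Option α) (C : Finset α) :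
    Finset α :=
  @Finset.filter _ (fun a => ∃ g, LinkedIn d C a g) (Classical.decPred _) Finset.univ

open Classical in
/-- The delegative simple game of the liquid democracy election `(N, ω, d, β)`:
a coalition `C` wins iff the weight accrued by its gurus from within `C` meets the
quota `β`. -/
noncomputable def nuD {α : Type*} [Fintype α] (ω : α → ℝ) (β : ℝ) (d : α → Option α)
    (C : Finset α) : ℤ :=
  if β ≤ ∑ a ∈ hatD d C, ω a then 1 else 0

/-- The delegative Banzhaf index of agent `i` in the liquid democracy election
`(N, ω, d, β)`. -/
noncomputable def DB {α : Type*} [Fintype α] [DecidableEq α] (ω : α → ℝ) (β : ℝ)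
    (d : α → Option α) (i : α) : ℚ :=
  banzhaf (nuD ω β d) i

lemma LinkedIn.congr {α : Type*} {d d' : α → Option α} {C : Finset α}
    (h : ∀ a ∈ C, d a = d' a) {a g : α} (hl : LinkedIn d C a g) : LinkedIn d' C a g := by
  induction hl with
  | guru hm he => exact .guru hm (h _ hm ▸ he)
  | step hm he hne _ ih => exact .step hm (h _ hm ▸ he) hne ih

lemma hatD_congr {α : Type*} [Fintype α] {d d' : α → Option α} {C : Finset α}
    (h : ∀ a ∈ C, d a = d' a) : hatD d C = hatD d' C := by
  ext a
  simp only [hatD, Finset.mem_filter, Finset.mem_univ, true_and]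
  exact ⟨fun ⟨g, hg⟩ => ⟨g, hg.congr h⟩, fun ⟨g, hg⟩ => ⟨g, hg.congr fun a ha => (h a ha).symm⟩⟩

lemma linked_update {α : Type*} [DecidableEq α] {d : α → Option α} {i j : α}
    (hij : i ≠ j) (hi : d i = some i) {C : Finset α} {a g : α}
    (hl : LinkedIn (Function.update d i (some j)) (insert i C) a g) :
    ∃ g', LinkedIn d (insert i C) a g' := by
  induction hl with
  | @guru a hm he =>
    by_cases h : a = i
    · rw [h, Function.update_self] at he
      exact absurd (Option.some.inj he).symm hij
    · rw [Function.update_of_ne h] at he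
      exact ⟨a, .guru hm he⟩
  | @step a b g hm he hne _ ih =>
    by_cases h : a = i
    · exact ⟨i, by rw [h]; exact .guru (Finset.mem_insert_self i C) hi⟩
    · rw [Function.update_of_ne h] at he
      obtain ⟨g', hg'⟩ := ih
      exact ⟨g', .step hm he hne hg'⟩

/-- Delegation never increases power: if the guru `i` (with `d i = some i`) changes
her strategy to delegate to some other agent `j`, her delegative Banzhaf index does
not increase. -/
theorem delegation_power_loss {α : Type*} [Fintype α] [DecidableEq α]
    (ω : α → ℝ) (hω : ∀ a, 0 < ω a) (β : ℝ) (d : α → Option α) (i j : α)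
    (hij : i ≠ j) (hi : d i = some i) :
    DB ω β (Function.update d i (some j)) i ≤ DB ω β d i := by
  set d' := Function.update d i (some j) with hd'
  unfold DB banzhaf
  have hpow : (0:ℚ) < 2 ^ (Fintype.card α - 1) := by positivity
  rw [div_le_div_iff_of_pos_right hpow]
  apply Finset.sum_le_sum
  intro C hC
  have hiC : i ∉ C := by
    intro h
    exact (Finset.mem_erase.mp (Finset.mem_powerset.mp hC h)).1 rfl
  -- ν' C = ν C since i ∉ C
  have hcongr : ∀ a ∈ C, d' a = d a := by
    intro a ha
    exact Function.update_of_ne (ne_of_mem_of_not_mem ha hiC) _ d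
  have hνC : nuD ω β d' C = nuD ω β d C := by
    unfold nuD
    rw [hatD_congr hcongr]
  -- ν' (insert i C) ≤ ν (insert i C)
  have hsub : hatD d' (insert i C) ⊆ hatD d (insert i C) := by
    intro a ha
    simp only [hatD, Finset.mem_filter, Finset.mem_univ, true_and] at ha ⊢
    obtain ⟨g, hg⟩ := ha
    exact linked_update hij hi hg
  have hνI : nuD ω β d' (insert i C) ≤ nuD ω β d (insert i C) := by
    unfold nuD
    split_ifs with h1 h2 h3
    · norm_num
    · exact absurd (h1.trans (Finset.sum_le_sum_of_subset_of_nonneg hsub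
        (fun a _ _ => (hω a).le))) h2
    · norm_num
    · norm_num
  have := hνI
  push_cast
  have hνC' : ((nuD ω β d' C : ℚ)) = (nuD ω β d C : ℚ) := by exact_mod_cast hνC
  have hνI' : ((nuD ω β d' (insert i C) : ℚ)) ≤ (nuD ω β d (insert i C) : ℚ) := by
    exact_mod_cast hνI
  linarith
end

section
/- Power monotonicity along delegation chains: in a liquid democracy election V = (N, ω, d, β), if agent i delegates directly to agent j (d(i) = j, i ≠ j), then the delegative Banzhaf index of i is at most that of j: DB_i(V) ≤ DB_j(V). -/
open Finset

lemma LinkedIn.memC {α : Type*} {d : α → Option α} {C : Finset α} {a g : α}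
    (h : LinkedIn d C a g) : a ∈ C := by
  cases h <;> assumption

lemma LinkedIn.mono {α : Type*} {d : α → Option α} {C C' : Finset α} (hCC : C ⊆ C')
    {a g : α} (h : LinkedIn d C a g) : LinkedIn d C' a g := by
  induction h with
  | guru ha hda => exact .guru (hCC ha) hda
  | step ha hda hab _ ih => exact .step (hCC ha) hda hab ih

lemma hatD_mono {α : Type*} [Fintype α] {d : α → Option α} {C C' : Finset α}
    (h : C ⊆ C') : hatD d C ⊆ hatD d C' := by
  intro a ha
  simp only [hatD, Finset.mem_filter] at *
  obtain ⟨-, g, hg⟩ := ha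
  exact ⟨Finset.mem_univ a, g, hg.mono h⟩

lemma nuD_mono {α : Type*} [Fintype α] {ω : α → ℝ} (hω : ∀ a, 0 < ω a) {β : ℝ}
    {d : α → Option α} {C C' : Finset α} (h : C ⊆ C') :
    nuD ω β d C ≤ nuD ω β d C' := by
  unfold nuD
  have hsum : ∑ a ∈ hatD d C, ω a ≤ ∑ a ∈ hatD d C', ω a :=
    Finset.sum_le_sum_of_subset_of_nonneg (hatD_mono h) (fun a _ _ => (hω a).le)
  split_ifs with h1 h2
  · exact le_refl 1
  · exact absurd (h1.trans hsum) h2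
  · norm_num
  · exact le_refl 0

lemma linkedIn_of_insert {α : Type*} [DecidableEq α] {d : α → Option α} {C : Finset α}
    {i j a g : α} (hij : i ≠ j) (hd : d i = some j) (hjC : j ∉ C)
    (h : LinkedIn d (insert i C) a g) : LinkedIn d C a g := by
  induction h with
  | @guru a ha hda =>
    rcases Finset.mem_insert.mp ha with rfl | ha'
    · rw [hd] at hda
      exact absurd (Option.some_injective _ hda) hij.symm
    · exact .guru ha' hda
  | @step a b g ha hda hab hb ih =>
    rcases Finset.mem_insert.mp ha with rfl | ha'
    · rw [hd] at hda
      obtain rfl := Option.some_injective _ hda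
      exact absurd ih.memC hjC
    · exact .step ha' hda hab ih

lemma nuD_insert_delegator {α : Type*} [Fintype α] [DecidableEq α] {ω : α → ℝ} {β : ℝ}
    {d : α → Option α} {C : Finset α} {i j : α} (hij : i ≠ j) (hd : d i = some j)
    (hjC : j ∉ C) : nuD ω β d (insert i C) = nuD ω β d C := by
  have : hatD d (insert i C) = hatD d C := by
    apply Finset.Subset.antisymm
    · intro a ha
      simp only [hatD, Finset.mem_filter] at *
      obtain ⟨-, g, hg⟩ := ha
      exact ⟨Finset.mem_univ a, g, linkedIn_of_insert hij hd hjC hg⟩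
    · exact hatD_mono (Finset.subset_insert _ _)
  unfold nuD
  rw [this]

/-- Power monotonicity: if agent `i` delegates directly to agent `j`, then `i`'s
delegative Banzhaf index is at most that of `j`. -/
theorem power_monotonicity {α : Type*} [Fintype α] [DecidableEq α]
    (ω : α → ℝ) (hω : ∀ a, 0 < ω a) (β : ℝ) (d : α → Option α) (i j : α)
    (hij : i ≠ j) (hd : d i = some j) :
    DB ω β d i ≤ DB ω β d j := by
  unfold DB banzhaf
  set ν := nuD ω β d with hν
  have hji : j ≠ i := hij.symm
  have hjmem : j ∈ Finset.univ.erase i := Finset.mem_erase.mpr ⟨hji, Finset.mem_univ j⟩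
  have himem : i ∈ Finset.univ.erase j := Finset.mem_erase.mpr ⟨hij, Finset.mem_univ i⟩
  set S : Finset α := (Finset.univ.erase i).erase j with hS
  have hjS : j ∉ S := Finset.notMem_erase _ _
  have hiS : i ∉ S := by
    rw [hS, Finset.erase_right_comm]
    exact Finset.notMem_erase _ _
  have hEi : Finset.univ.erase i = insert j S := (Finset.insert_erase hjmem).symm
  have hEj : Finset.univ.erase j = insert i S := by
    rw [hS, Finset.erase_right_comm]
    exact (Finset.insert_erase himem).symm
  rw [hEi, hEj, Finset.sum_powerset_insert hjS, Finset.sum_powerset_insert hiS]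
  apply div_le_div_of_nonneg_right ?_ (by positivity)
  rw [← Finset.sum_add_distrib, ← Finset.sum_add_distrib]
  apply Finset.sum_le_sum
  intro C hC
  rw [Finset.mem_powerset] at hC
  have hjC : j ∉ C := fun h => hjS (hC h)
  have hiC : i ∉ C := fun h => hiS (hC h)
  have h1 : ν (insert i C) = ν C := nuD_insert_delegator hij hd hjC
  have h2 : ν C ≤ ν (insert j C) := nuD_mono hω (Finset.subset_insert _ _)
  have h3 : insert i (insert j C) = insert j (insert i C) := Finset.insert_comm _ _ _
  rw [h1, h3]
  push_cast
  have h2q : ((ν C : ℤ) : ℚ) ≤ ((ν (insert j C) : ℤ) : ℚ) := by exact_mod_cast h2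
  linarith
end

section
/- Direct delegation dominates indirect delegation: in a liquid democracy election V = (N, ω, d, β), suppose d(k) = i and d(i) = j. Let d' be the profile identical to d except d'(k) = j. Then DB_k(V') ≥ DB_k(V), where V' = (N, ω, d', β). -/
open Finset

lemma linkedIn_congr {α : Type*} {d d' : α → Option α} {C : Finset α}
    (h : ∀ x ∈ C, d x = d' x) {a g : α} (hl : LinkedIn d C a g) : LinkedIn d' C a g := by
  induction hl with
  | guru hC hd => exact .guru hC ((h _ hC) ▸ hd)
  | step hC hd hne _ ih => exact .step hC ((h _ hC) ▸ hd) hne ih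

lemma linkedIn_update {α : Type*} [DecidableEq α] {d : α → Option α} {i j k : α}
    (hki : k ≠ i) (hij : i ≠ j) (hkj : k ≠ j)
    (hdk : d k = some i) (hdi : d i = some j) {S : Finset α} {a g : α}
    (hl : LinkedIn d S a g) : LinkedIn (Function.update d k (some j)) S a g := by
  induction hl with
  | @guru a hC hd =>
      have hak : a ≠ k := by
        rintro rfl; rw [hdk] at hd; exact hki (Option.some.inj hd).symm
      exact .guru hC (by rw [Function.update_of_ne hak]; exact hd)
  | @step a b g hC hd hab hbg ih =>
      by_cases hak : a = k
      · rw [hak, hdk] at hd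
        obtain rfl : i = b := Option.some.inj hd
        have hj : LinkedIn (Function.update d k (some j)) S j g := by
          cases ih with
          | guru hiC hd2 =>
              rw [Function.update_of_ne (Ne.symm hki), hdi] at hd2
              exact absurd (Option.some.inj hd2).symm hij
          | step hiC hd2 hne2 h2 =>
              rw [Function.update_of_ne (Ne.symm hki), hdi] at hd2
              obtain rfl := Option.some.inj hd2
              exact h2
        exact .step hC (by rw [hak]; exact Function.update_self k _ d) (hak ▸ hkj) hj
      · exact .step hC (by rw [Function.update_of_ne hak]; exact hd) hab ih

/-- Direct delegation dominates indirect delegation: if `k` delegates to `i` and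
`i` delegates to `j`, then `k` rerouting her delegation directly to `j` weakly
increases her delegative Banzhaf index. -/
theorem direct_vs_indirect_delegation {α : Type*} [Fintype α] [DecidableEq α]
    (ω : α → ℝ) (hω : ∀ a, 0 < ω a) (β : ℝ) (d : α → Option α) (i j k : α)
    (hki : k ≠ i) (hij : i ≠ j) (hkj : k ≠ j)
    (hdk : d k = some i) (hdi : d i = some j) :
    DB ω β d k ≤ DB ω β (Function.update d k (some j)) k := by
  set d' := Function.update d k (some j) with hd'
  unfold DB banzhaf
  have h2 : (0:ℚ) < 2 ^ (Fintype.card α - 1) := by positivity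
  rw [div_le_div_iff_of_pos_right h2]
  apply Finset.sum_le_sum
  intro C hC
  rw [Finset.mem_powerset] at hC
  have hkC : k ∉ C := fun h => (Finset.mem_erase.mp (hC h)).1 rfl
  have hagree : ∀ x ∈ C, d x = d' x := by
    intro x hx
    have hxk : x ≠ k := by rintro rfl; exact hkC hx
    rw [hd', Function.update_of_ne hxk]
  have heq : hatD d C = hatD d' C := by
    ext a
    simp only [hatD, Finset.mem_filter, Finset.mem_univ, true_and]
    constructor
    · rintro ⟨g, hg⟩; exact ⟨g, linkedIn_congr hagree hg⟩
    · rintro ⟨g, hg⟩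
      exact ⟨g, linkedIn_congr (fun x hx => (hagree x hx).symm) hg⟩
  have hsub : hatD d (insert k C) ⊆ hatD d' (insert k C) := by
    intro a ha
    simp only [hatD, Finset.mem_filter, Finset.mem_univ, true_and] at ha ⊢
    obtain ⟨g, hg⟩ := ha
    exact ⟨g, linkedIn_update hki hij hkj hdk hdi hg⟩
  have hC_eq : nuD ω β d C = nuD ω β d' C := by unfold nuD; rw [heq]
  have hins : nuD ω β d (insert k C) ≤ nuD ω β d' (insert k C) := by
    unfold nuD
    have hsum : ∑ a ∈ hatD d (insert k C), ω a ≤ ∑ a ∈ hatD d' (insert k C), ω a :=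
      Finset.sum_le_sum_of_subset_of_nonneg hsub (fun a _ _ => (hω a).le)
    split_ifs with h1 h2
    · exact le_refl _
    · exact absurd (h1.trans hsum) h2
    · norm_num
    · exact le_refl _
  have h : nuD ω β d (insert k C) - nuD ω β d C ≤
      nuD ω β d' (insert k C) - nuD ω β d' C := by
    rw [hC_eq]; exact sub_le_sub_right hins _
  exact_mod_cast h
end
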